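/- arXiv:1311.3009 — 9 statements merged into one kernel-verified Lean document; each statement's English description precedes it below -/
import Mathlib

section
/- Let q be a prime power, A an (n-1)×n matrix over F_{q^2} of rank n-1. The system A x^T = 0 has a nonzero solution in F_q^n if and only if A^{(q)} and A are row equivalent, where A^{(q)} is obtained from A by raising every entry to its q-th power. -/
/-!
The Frobenius `σ : x ↦ x ^ q` is an involutive automorphism of `F`; acting entrywise it is a
`σ`-semilinear map of `Fⁿ` sending the row space of `A` onto that of `A⁽ᵠ⁾`. If `x ∈ F_qⁿ` is a
nonzero solution, the rank condition makes the row space of `A` the hyperplane `x^⊥`, which `σ`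
preserves because `σ x = x`. Conversely, if `σ` preserves the row space, it preserves
`ker A = (row space)^⊥`, which is nonzero since `A` has fewer rows than columns. For `v ≠ 0` in
`ker A` the vectors `a • v + σ (a • v)` are `σ`-fixed, and one of them is nonzero because the trace
`t ↦ t + t ^ q` is a polynomial of degree `q < q²` and so does not vanish on all of `F`.
-/

open Matrix Submodule Polynomial

namespace FiniteField

variable {K : Type*} [Field K] [Fintype K]

theorem exists_ringHom_eq_pow {q k : ℕ} (hk : k ≠ 0) (hK : Fintype.card K = q ^ k) :
    ∃ σ : K →+* K, ∀ x, σ x = x ^ q := by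
  obtain ⟨p, _, m, hp, hm⟩ := FiniteField.card' K
  obtain ⟨s, -, rfl⟩ := (Nat.dvd_prime_pow hp).1 (hm ▸ hK ▸ dvd_pow_self q hk)
  have : ExpChar K p := ExpChar.prime hp
  exact ⟨iterateFrobenius K p s, iterateFrobenius_def p s⟩

theorem exists_add_pow_ne_zero {q : ℕ} (hq : 1 < q) (hK : q < Fintype.card K) :
    ∃ t : K, t + t ^ q ≠ 0 := by
  classical
  by_contra! h
  have hdeg : (X ^ q + X : K[X]).natDegree = q := by
    rw [natDegree_add_eq_left_of_natDegree_lt] <;> simp [hq]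
  have hne : (X ^ q + X : K[X]) ≠ 0 := ne_zero_of_natDegree_gt (hdeg ▸ hq)
  have hroots : (Finset.univ : Finset K).val ⊆ (X ^ q + X : K[X]).roots := fun t _ =>
    (mem_roots hne).2 (by simp [add_comm, h t])
  have := card_le_degree_of_subset_roots hroots
  rw [Finset.card_univ, hdeg] at this
  omega

end FiniteField

namespace RingHom

variable {R S : Type*} [Semiring R] [Semiring S]

def piSemilinearMap (σ : R →+* S) (ι : Type*) : (ι → R) →ₛₗ[σ] (ι → S) where
  toFun x := σ ∘ x
  map_add' x y := by ext; simp
  map_smul' c x := by ext; simp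

@[simp]
theorem piSemilinearMap_apply (σ : R →+* S) {ι : Type*} (x : ι → R) :
    σ.piSemilinearMap ι x = σ ∘ x := rfl

end RingHom

section RowSpace

variable {F : Type*} [Field F] {m n : Type*}

theorem span_rows_map (σ : F →+* F) [RingHomSurjective σ] (A : Matrix m n F) :
    span F (Set.range (A.map σ).row) = (span F (Set.range A.row)).map (σ.piSemilinearMap n) := by
  rw [map_span, ← Set.range_comp]
  rfl

variable [Fintype n]

theorem span_rows_le_ker_dotProduct_iff (A : Matrix m n F) (x : n → F) :
    span F (Set.range A.row) ≤ LinearMap.ker (dotProductBilin F F x) ↔ A *ᵥ x = 0 := by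
  rw [span_le, Set.range_subset_iff]
  simp only [SetLike.mem_coe, LinearMap.mem_ker, dotProductBilin_apply_apply, dotProduct_comm x,
    funext_iff, mulVec, Pi.zero_apply, row]

theorem finrank_ker_dotProduct {x : n → F} (hx : x ≠ 0) :
    Module.finrank F (LinearMap.ker (dotProductBilin F F x)) + 1 = Fintype.card n := by
  classical
  obtain ⟨i, hi⟩ := Function.ne_iff.1 hx
  have hne : dotProductBilin F F x ≠ 0 := fun h => hi <| by
    simpa [dotProduct_single] using LinearMap.congr_fun h (Pi.single i 1)
  rw [Module.Dual.finrank_ker_add_one_of_ne_zero hne, Module.finrank_fintype_fun_eq_card]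

theorem span_rows_eq_ker_dotProduct [Fintype m] {A : Matrix m n F}
    (hA : A.rank = Fintype.card n - 1) {x : n → F} (hx : x ≠ 0) (hAx : A *ᵥ x = 0) :
    span F (Set.range A.row) = LinearMap.ker (dotProductBilin F F x) := by
  refine eq_of_le_of_finrank_le ((span_rows_le_ker_dotProduct_iff A x).2 hAx) ?_
  have := finrank_ker_dotProduct hx
  rw [← rank_eq_finrank_span_row, hA]
  omega

theorem map_ker_dotProduct_of_comp_eq_self {σ : F →+* F} [RingHomSurjective σ]
    (hσ : Function.Involutive σ) {x : n → F} (hx : σ ∘ x = x) :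
    (LinearMap.ker (dotProductBilin F F x)).map (σ.piSemilinearMap n) =
      LinearMap.ker (dotProductBilin F F x) := by
  have hmem : ∀ y, x ⬝ᵥ y = 0 → x ⬝ᵥ σ ∘ y = 0 := fun y hy => by
    rw [← hx, ← RingHom.map_dotProduct, hy, map_zero]
  ext y
  simp only [mem_map, LinearMap.mem_ker, dotProductBilin_apply_apply,
    RingHom.piSemilinearMap_apply]
  refine ⟨fun ⟨z, hz, hzy⟩ => hzy ▸ hmem z hz, fun hy => ⟨σ ∘ y, hmem y hy, ?_⟩⟩
  ext i
  exact hσ (y i)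

theorem span_rows_map_eq_of_mulVec_eq_zero [Fintype m] {σ : F →+* F} (hσ : Function.Involutive σ)
    {A : Matrix m n F} (hA : A.rank = Fintype.card n - 1) {x : n → F} (hx : x ≠ 0)
    (hAx : A *ᵥ x = 0) (hσx : σ ∘ x = x) :
    span F (Set.range (A.map σ).row) = span F (Set.range A.row) := by
  have : RingHomSurjective σ := ⟨hσ.surjective⟩
  rw [span_rows_map, span_rows_eq_ker_dotProduct hA hx hAx,
    map_ker_dotProduct_of_comp_eq_self hσ hσx]

theorem mulVec_comp_eq_zero_of_span_rows_map_eq {σ : F →+* F} {A : Matrix m n F}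
    (hA : span F (Set.range (A.map σ).row) = span F (Set.range A.row)) {x : n → F}
    (hAx : A *ᵥ x = 0) : A *ᵥ (σ ∘ x) = 0 := by
  have : A.map σ *ᵥ (σ ∘ x) = 0 := funext fun i => by
    rw [← RingHom.map_mulVec, hAx, Pi.zero_apply, map_zero]
  rwa [← span_rows_le_ker_dotProduct_iff, hA, span_rows_le_ker_dotProduct_iff] at this

end RowSpace

theorem Submodule.exists_ne_zero_comp_eq_self {F ι : Type*} [Field F] {σ : F →+* F}
    (hσ : Function.Involutive σ) (htr : ∃ t, t + σ t ≠ 0) {K : Submodule F (ι → F)}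
    (hσK : ∀ x ∈ K, σ ∘ x ∈ K) (hK : K ≠ ⊥) : ∃ x ∈ K, x ≠ 0 ∧ σ ∘ x = x := by
  obtain ⟨v, hvK, hv⟩ := K.ne_bot_iff.1 hK
  obtain ⟨i, hi⟩ := Function.ne_iff.1 hv
  obtain ⟨t, ht⟩ := htr
  have hwK : (t / v i) • v ∈ K := K.smul_mem _ hvK
  refine ⟨(t / v i) • v + σ ∘ ((t / v i) • v), K.add_mem hwK (hσK _ hwK), ?_, ?_⟩
  · exact Function.ne_iff.2 ⟨i, by simpa [div_mul_cancel₀ _ hi] using ht⟩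
  · ext j
    simp [hσ _, add_comm]

/-- Theorem 2.2: For an `(n-1) × n` matrix `A` over `F_{q²}` of rank `n-1`, the system
`A xᵀ = 0` has a nonzero solution in `F_qⁿ` iff `A⁽ᵠ⁾` (entrywise `q`-th power) and `A`
are row equivalent, i.e. have the same row space. -/
theorem stmt1 {F : Type*} [Field F] [Fintype F] (q n : ℕ) (hF : Fintype.card F = q ^ 2)
    (hn : 0 < n) (A : Matrix (Fin (n - 1)) (Fin n) F) (hA : A.rank = n - 1) :
    (∃ x : Fin n → F, x ≠ 0 ∧ A.mulVec x = 0 ∧ ∀ i, (x i) ^ q = x i) ↔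
      Submodule.span F (Set.range fun j => (A.map (· ^ q)) j) =
        Submodule.span F (Set.range fun j => A j) := by
  obtain ⟨σ, hσ⟩ := FiniteField.exists_ringHom_eq_pow two_ne_zero hF
  have hσσ : Function.Involutive σ := fun x => by
    rw [hσ, hσ, ← pow_mul, ← sq, ← hF, FiniteField.pow_card]
  have hq : 1 < q := (one_lt_pow_iff two_ne_zero).1 (hF ▸ Fintype.one_lt_card)
  have hfix (x : Fin n → F) : (∀ i, x i ^ q = x i) ↔ σ ∘ x = x := by
    simp [funext_iff, hσ]
  have hAσ : A.map (· ^ q) = A.map σ := by ext; simp [hσ]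
  simp only [hfix, hAσ]
  refine ⟨fun ⟨x, hx, hAx, hσx⟩ => span_rows_map_eq_of_mulVec_eq_zero hσσ (by simpa) hx hAx hσx,
    fun h => ?_⟩
  obtain ⟨t, ht⟩ := FiniteField.exists_add_pow_ne_zero hq (hF ▸ lt_self_pow₀ hq one_lt_two)
  have hker : LinearMap.ker A.mulVecLin ≠ ⊥ :=
    LinearMap.ker_ne_bot_of_finrank_lt (by
      rw [Module.finrank_fintype_fun_eq_card, Module.finrank_fintype_fun_eq_card, Fintype.card_fin,
        Fintype.card_fin]
      omega)
  obtain ⟨x, hxA, hx, hσx⟩ := exists_ne_zero_comp_eq_self hσσ ⟨t, by rwa [hσ]⟩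
    (fun x hx => mulVec_comp_eq_zero_of_span_rows_map_eq h hx) hker
  exact ⟨x, hx, hxA, hσx⟩
end

section
/- Let q be a prime power, m a divisor of q^2-1, n = m+1, and let α_1, ..., α_m be all m-th roots of unity in F_{q^2}. Let A be the (n-1)×n Vandermonde-type matrix whose rows are (0^j, α_1^j, ..., α_m^j) for j = 0, 1, ..., n-2 (with the convention 0^0 = 1). Then the system A x^T = 0 has a nonzero solution in F_q^n. -/
/-- Example 2.3: let `m ∣ q² - 1`, `n = m + 1`, and let `α₁, …, α_m` be all the `m`-th
roots of unity in `F_{q²}`.  The Vandermonde-type system with evaluation points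
`0, α₁, …, α_m` (rows `j = 0, …, n-2`, convention `0⁰ = 1`) has a nonzero solution
in `F_qⁿ`. -/
theorem stmt4 {F : Type*} [Field F] [Fintype F] (q m : ℕ) (hF : Fintype.card F = q ^ 2)
    (hm : m ∣ q ^ 2 - 1) (α : Fin m → F) (hinj : Function.Injective α)
    (hall : ∀ x : F, x ^ m = 1 ↔ ∃ i, α i = x) :
    ∃ x : Fin (m + 1) → F, x ≠ 0 ∧
      (Matrix.of fun (j : Fin m) (i : Fin (m + 1)) =>
          (Fin.cons (0 : F) α i) ^ (j : ℕ)).mulVec x = 0 ∧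
      ∀ i, (x i) ^ q = x i := by
  classical
  have hm1 : 0 < m := by
    rcases Nat.eq_zero_or_pos m with h | h
    · subst h
      obtain ⟨i, _⟩ := (hall 1).mp (by simp)
      exact i.elim0
    · exact h
  have hroot : ∀ i, (α i) ^ m = 1 := fun i => (hall (α i)).mpr ⟨i, rfl⟩
  -- key sum lemma
  have key : ∀ j : ℕ, 0 < j → j < m → ∑ i : Fin m, α i ^ j = 0 := by
    intro j hj0 hjm
    have hex : ∃ k, (α k) ^ j ≠ 1 := by
      by_contra h
      push_neg at h
      have hsub : Finset.univ.image α ⊆ (Polynomial.nthRoots j (1 : F)).toFinset := by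
        intro x hx
        obtain ⟨i, _, rfl⟩ := Finset.mem_image.mp hx
        rw [Multiset.mem_toFinset, Polynomial.mem_nthRoots hj0]
        exact h i
      have h1 : m ≤ (Finset.univ.image α).card := by
        rw [Finset.card_image_of_injective _ hinj, Finset.card_univ, Fintype.card_fin]
      have h2 : (Polynomial.nthRoots j (1 : F)).toFinset.card ≤ j :=
        le_trans (Multiset.toFinset_card_le _) (by simpa using Polynomial.card_nthRoots j (1:F))
      have := Finset.card_le_card hsub
      omega
    obtain ⟨k, hk⟩ := hex
    set β := α k with hβ
    have hσ : ∀ i, ∃ i', α i' = β * α i := by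
      intro i
      exact (hall _).mp (by rw [mul_pow, hroot, hroot, one_mul])
    choose σ hσ using hσ
    have hβ0 : β ≠ 0 := fun h0 => by
      have h1 := hroot k
      rw [← hβ, h0, zero_pow hm1.ne'] at h1
      exact zero_ne_one h1
    have hσinj : Function.Injective σ := by
      intro a b hab
      apply hinj
      have h1 := hσ a
      rw [hab, hσ b] at h1
      exact mul_left_cancel₀ hβ0 h1.symm
    have hbij : Function.Bijective σ := Finite.injective_iff_bijective.mp hσinj
    have hsum : ∑ i : Fin m, α (σ i) ^ j = ∑ i : Fin m, α i ^ j :=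
      hbij.sum_comp (fun i => α i ^ j)
    have hsum2 : ∑ i : Fin m, α (σ i) ^ j = β ^ j * ∑ i : Fin m, α i ^ j := by
      rw [Finset.mul_sum]
      exact Finset.sum_congr rfl fun i _ => by rw [hσ i, mul_pow]
    have hfin : (β ^ j - 1) * ∑ i : Fin m, α i ^ j = 0 := by
      rw [sub_mul, one_mul, ← hsum2, hsum, sub_self]
    rcases mul_eq_zero.mp hfin with h | h
    · exact absurd (by linear_combination h) hk
    · exact h
  refine ⟨Fin.cons (-(m : F)) (fun _ => 1), ?_, ?_, ?_⟩
  · intro h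
    have := congrFun h ((⟨0, hm1⟩ : Fin m).succ)
    rw [Fin.cons_succ] at this
    rw [Pi.zero_apply] at this
    exact one_ne_zero this
  · funext j
    simp only [Matrix.mulVec, dotProduct, Matrix.of_apply, Pi.zero_apply]
    rw [Fin.sum_univ_succ]
    simp only [Fin.cons_zero, Fin.cons_succ, mul_one]
    rcases Nat.eq_zero_or_pos (j : ℕ) with hj | hj
    · rw [hj]
      simp
    · rw [zero_pow (by omega : (j:ℕ) ≠ 0), key (j:ℕ) hj j.isLt]
      ring
  · -- Frobenius fixes prime-field elements
    obtain ⟨p, hchar⟩ := CharP.exists F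
    haveI := hchar
    have hp : p.Prime := CharP.char_is_prime F p
    haveI : Fact p.Prime := ⟨hp⟩
    obtain ⟨n, hcard⟩ := FiniteField.card F p
    have hqdvd : q ∣ p ^ (n : ℕ) := by
      rw [← hcard.2, hF]
      exact ⟨q, sq q⟩
    obtain ⟨k, _, hqk⟩ := (Nat.dvd_prime_pow hp).mp hqdvd
    have hfix : ∀ a : F, (iterateFrobenius F p k) a = a → a ^ q = a := by
      intro a ha
      rw [hqk, ← iterateFrobenius_def, ha]
    intro i
    refine Fin.cases ?_ ?_ i
    · rw [Fin.cons_zero]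
      apply hfix
      rw [map_neg, map_natCast]
    · intro i'
      rw [Fin.cons_succ]
      exact one_pow q
end

section
/- Let q be a prime power, β ∈ F_{q^2}, and α_1, ..., α_n distinct elements of F_q. Let A(γ_1,...,γ_n) denote the (n-1)×n matrix with (j,i)-entry γ_i^{j} for j = 0,...,n-2. Then the system A(β+α_1, ..., β+α_n) x^T = 0 has a nonzero solution in F_q^n. -/
/-!
Expanding `(β + α i) ^ j` binomially gives `A(β + α) = L * A(α)` for a weighted Pascal matrix `L`,
so every kernel vector of `A(α)` is one of `A(β + α)`. As `q` is a power of the characteristic,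
`{y | y ^ q = y}` is a subfield containing the `α i`, and over it the `(n - 1) × n` matrix `A(α)`
has a nonzero kernel vector.
-/

open Finset Matrix

def powMatrix {R : Type*} [CommRing R] {n : ℕ} (m : ℕ) (γ : Fin n → R) :
    Matrix (Fin m) (Fin n) R :=
  Matrix.of fun j i => γ i ^ (j : ℕ)

/-- Lower triangular: `Nat.choose j k = 0` kills the truncated `j - k` when `j < k`. -/
def pascalMatrix {R : Type*} [CommRing R] (m : ℕ) (β : R) : Matrix (Fin m) (Fin m) R :=
  Matrix.of fun j k => β ^ ((j : ℕ) - k) * ((j : ℕ).choose k : R)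

theorem powMatrix_const_add {R : Type*} [CommRing R] {n : ℕ} (m : ℕ) (β : R) (α : Fin n → R) :
    powMatrix m (fun i => β + α i) = pascalMatrix m β * powMatrix m α := by
  ext j i
  have hj : (j : ℕ) + 1 ≤ m := j.isLt
  simp only [powMatrix, pascalMatrix, Matrix.mul_apply, Matrix.of_apply]
  rw [Fin.sum_univ_eq_sum_range (fun k => β ^ ((j : ℕ) - k) * ((j : ℕ).choose k : R) * α i ^ k),
    ← sum_subset (range_subset_range.2 hj), add_comm, add_pow]
  · exact sum_congr rfl fun k _ => by ring
  · intro k _ hk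
    rw [Nat.choose_eq_zero_of_lt (by simpa using hk)]
    simp

theorem Matrix.exists_mulVec_eq_zero_of_card_lt {K m n : Type*} [Field K] [Fintype m]
    [Fintype n] (A : Matrix m n K) (h : Fintype.card m < Fintype.card n) :
    ∃ v ≠ 0, A *ᵥ v = 0 := by
  have hker : LinearMap.ker A.mulVecLin ≠ ⊥ :=
    LinearMap.ker_ne_bot_of_finrank_lt (by simpa using h)
  obtain ⟨v, hv, hv0⟩ := (Submodule.ne_bot_iff _).1 hker
  exact ⟨v, hv0, hv⟩

theorem Subfield.exists_mulVec_eq_zero_of_card_lt {F m n : Type*} [Field F] [Fintype m]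
    [Fintype n] (K : Subfield F) (A : Matrix m n F) (hA : ∀ j i, A j i ∈ K)
    (h : Fintype.card m < Fintype.card n) :
    ∃ v ≠ 0, A *ᵥ v = 0 ∧ ∀ i, v i ∈ K := by
  obtain ⟨v, hv0, hv⟩ :=
    (Matrix.of fun j i => (⟨A j i, hA j i⟩ : K)).exists_mulVec_eq_zero_of_card_lt h
  refine ⟨K.subtype ∘ v, fun h0 => hv0 (funext fun i => Subtype.ext (congrFun h0 i)), ?_,
    fun i => (v i).2⟩
  ext j
  have hmap := RingHom.map_mulVec K.subtype (Matrix.of fun j i => (⟨A j i, hA j i⟩ : K)) v j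
  rw [hv, Pi.zero_apply, map_zero] at hmap
  exact hmap.symm

theorem FiniteField.exists_ringChar_pow_eq_of_card_eq_pow {F : Type*} [Field F] [Fintype F]
    {q k : ℕ} (hk : k ≠ 0) (h : Fintype.card F = q ^ k) : ∃ m, q = ringChar F ^ m := by
  obtain ⟨e, hp, hcard⟩ := FiniteField.card F (ringChar F)
  have hq : q ∣ ringChar F ^ (e : ℕ) := hcard ▸ h ▸ dvd_pow_self q hk
  obtain ⟨m, -, hm⟩ := (Nat.dvd_prime_pow hp).1 hq
  exact ⟨m, hm⟩

theorem stmt5_general {F : Type*} [Field F] [Fintype F] (q n : ℕ) (hF : Fintype.card F = q ^ 2)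
    (hn : 0 < n) (β : F) (α : Fin n → F)
    (hFq : ∀ i, (α i) ^ q = α i) :
    ∃ x : Fin n → F, x ≠ 0 ∧
      (Matrix.of fun (j : Fin (n - 1)) (i : Fin n) => (β + α i) ^ (j : ℕ)).mulVec x = 0 ∧
      ∀ i, (x i) ^ q = x i := by
  obtain ⟨m, rfl⟩ := FiniteField.exists_ringChar_pow_eq_of_card_eq_pow two_ne_zero hF
  have : Fact (ringChar F).Prime := ⟨CharP.char_is_prime F _⟩
  let K := (iterateFrobenius F (ringChar F) m).eqLocusField (RingHom.id F)
  have hK (y : F) : y ∈ K ↔ y ^ ringChar F ^ m = y := by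
    simp [K, iterateFrobenius_def]
  obtain ⟨x, hx0, hx, hxK⟩ := K.exists_mulVec_eq_zero_of_card_lt (powMatrix (n - 1) α)
    (fun _ i => K.pow_mem ((hK _).2 (hFq i)) _) (by simpa using hn)
  refine ⟨x, hx0, ?_, fun i => (hK _).1 (hxK i)⟩
  change powMatrix (n - 1) (fun i => β + α i) *ᵥ x = 0
  rw [powMatrix_const_add, ← Matrix.mulVec_mulVec, hx, Matrix.mulVec_zero]

/-- Example 2.4: for `β ∈ F_{q²}` and distinct `α₁, …, α_n ∈ F_q`, the Vandermonde-type
system at the shifted points `β + α₁, …, β + α_n` has a nonzero solution in `F_qⁿ`. -/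
theorem stmt5 {F : Type*} [Field F] [Fintype F] (q n : ℕ) (hF : Fintype.card F = q ^ 2)
    (hn : 0 < n) (β : F) (α : Fin n → F) (hinj : Function.Injective α)
    (hFq : ∀ i, (α i) ^ q = α i) :
    ∃ x : Fin n → F, x ≠ 0 ∧
      (Matrix.of fun (j : Fin (n - 1)) (i : Fin n) => (β + α i) ^ (j : ℕ)).mulVec x = 0 ∧
      ∀ i, (x i) ^ q = x i :=
  stmt5_general q n hF hn β α hFq
end

section
/- Let q be a prime power and n = q^2. Let α_1 = 0 and α_2, ..., α_n be all (q^2-1)-th roots of unity in F_{q^2}. Let A_∞ be the n×(n+1) matrix whose row j (for j = 0,...,n-1) is (α_1^j, ..., α_n^j, δ_{j,n-1}), where the last column is all zeros except a 1 in the last row. Then A_∞ x^T = 0 has a nonzero solution in F_q^{n+1}. -/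
/-! The all-ones vector works. Row `j` of `A_∞` applied to it is `∑_{x ∈ F} x ^ j + δ_{j,n-1}`,
and since `|F| = n` the power sum `∑_{x ∈ F} x ^ j` vanishes for `j < n - 1`, while for
`j = n - 1` every nonzero `x` contributes `1`, giving `n - 1 = -1` in `F`. -/

theorem FiniteField.sum_pow_of_le_card_sub_one {K : Type*} [Field K] [Fintype K] [DecidableEq K]
    {j : ℕ} (hj : j ≤ Fintype.card K - 1) :
    ∑ x : K, x ^ j = if j = Fintype.card K - 1 then -1 else 0 := by
  split_ifs with h
  · have hpow : ∀ x : K, x ^ j = 1 - if x = 0 then 1 else 0 := by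
      intro x
      split_ifs with hx
      · rw [hx, zero_pow (by have := Fintype.one_lt_card (α := K); omega), sub_self]
      · rw [h, FiniteField.pow_card_sub_one_eq_one x hx, sub_zero]
    simp [hpow, Finset.sum_sub_distrib]
  · exact FiniteField.sum_pow_lt_card_sub_one K j (by omega)

theorem stmt6_general {F : Type*} [Field F] [Fintype F] (q : ℕ) (hF : Fintype.card F = q ^ 2)
    (α : Fin (q ^ 2) → F) (hbij : Function.Bijective α) :
    ∃ x : Fin (q ^ 2 + 1) → F, x ≠ 0 ∧
      (Matrix.of fun (j : Fin (q ^ 2)) (i : Fin (q ^ 2 + 1)) =>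
          if h : (i : ℕ) < q ^ 2 then (α ⟨i, h⟩) ^ (j : ℕ)
          else if (j : ℕ) = q ^ 2 - 1 then 1 else 0).mulVec x = 0 ∧
      ∀ i, (x i) ^ q = x i := by
  classical
  refine ⟨1, one_ne_zero, ?_, fun _ => one_pow q⟩
  ext j
  have hsum : ∑ i, α i ^ (j : ℕ) = ∑ x : F, x ^ (j : ℕ) :=
    Fintype.sum_bijective α hbij _ _ fun _ => rfl
  simp only [Matrix.mulVec, dotProduct, Pi.one_apply, mul_one, Matrix.of_apply,
    Fin.sum_univ_castSucc, Fin.val_castSucc, Fin.is_lt, dite_true, Fin.eta, Fin.val_last,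
    lt_irrefl, dite_false, Pi.zero_apply, hsum]
  rw [FiniteField.sum_pow_of_le_card_sub_one (by omega), hF]
  split_ifs <;> simp

/-- Example 2.5: let `n = q²`, `α₁ = 0` and `α₂, …, α_n` all `(q²-1)`-th roots of unity
(so the `αᵢ` enumerate all of `F_{q²}`).  The `n × (n+1)` system `A_∞ xᵀ = 0`, where row
`j` of `A_∞` is `(α₁ʲ, …, α_nʲ, δ_{j,n-1})`, has a nonzero solution in `F_q^{n+1}`. -/
theorem stmt6 {F : Type*} [Field F] [Fintype F] (q : ℕ) (hF : Fintype.card F = q ^ 2)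
    (α : Fin (q ^ 2) → F) (hbij : Function.Bijective α)
    (h0 : ∀ i : Fin (q ^ 2), (i : ℕ) = 0 → α i = 0) :
    ∃ x : Fin (q ^ 2 + 1) → F, x ≠ 0 ∧
      (Matrix.of fun (j : Fin (q ^ 2)) (i : Fin (q ^ 2 + 1)) =>
          if h : (i : ℕ) < q ^ 2 then (α ⟨i, h⟩) ^ (j : ℕ)
          else if (j : ℕ) = q ^ 2 - 1 then 1 else 0).mulVec x = 0 ∧
      ∀ i, (x i) ^ q = x i :=
  stmt6_general q hF α hbij
end

section
/- Let α_1,...,α_n be distinct elements of F_{q^2} and v_1,...,v_n nonzero elements of F_{q^2}. Suppose (c_1,...,c_n) ∈ F_q^n is a nonzero solution of the Vandermonde system Σ_i α_i^j x_i = 0 for j = 0,...,n-2, and v_i^{q+1} = c_i for all i. If GRS_k(a,v)^q ⊆ GRS_{n-k}(a,v^q), then GRS_k(a,v) is Hermitian self-orthogonal. -/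
/-- The generalized Reed–Solomon code `GRS_k(a, v)`: codewords
`(v₁ f(α₁), …, v_n f(α_n))` for polynomials `f` of degree `≤ k - 1`. -/
def GRS {F : Type*} [Field F] (n k : ℕ) (a v : Fin n → F) : Set (Fin n → F) :=
  {w | ∃ f : Polynomial F, f.degree < (k : WithBot ℕ) ∧ w = fun i => v i * f.eval (a i)}

/-- Lemma 3.1(i): with `α₁, …, α_n` distinct, `v_i ≠ 0`, a nonzero solution
`c ∈ F_qⁿ` of the Vandermonde system `Σᵢ αᵢʲ xᵢ = 0` (`j = 0, …, n-2`) and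
`vᵢ^{q+1} = cᵢ`, if `GRS_k(a,v)ᵠ ⊆ GRS_{n-k}(a,vᵠ)` then `GRS_k(a,v)` is
Hermitian self-orthogonal. -/
theorem stmt10 {F : Type*} [Field F] [Fintype F] (q n k : ℕ) (hF : Fintype.card F = q ^ 2)
    (a v c : Fin n → F) (ha : Function.Injective a) (hv : ∀ i, v i ≠ 0)
    (hcFq : ∀ i, (c i) ^ q = c i) (hc0 : c ≠ 0)
    (hsol : ∀ j : ℕ, j < n - 1 → ∑ i, (a i) ^ j * c i = 0)
    (hvc : ∀ i, (v i) ^ (q + 1) = c i)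
    (hincl : ∀ w ∈ GRS n k a v,
      (fun i => (w i) ^ q) ∈ GRS n (n - k) a (fun i => (v i) ^ q)) :
    ∀ b ∈ GRS n k a v, ∀ w ∈ GRS n k a v, ∑ i, b i * (w i) ^ q = 0 := by
  intro b hb w hw
  obtain ⟨f, hf, rfl⟩ := hb
  obtain ⟨h, hh, hwq⟩ := hincl w hw
  have key : ∀ i : Fin n,
      (v i * f.eval (a i)) * (w i) ^ q = c i * (f * h).eval (a i) := by
    intro i
    have hwi : (w i) ^ q = (v i) ^ q * h.eval (a i) := congrFun hwq i
    rw [hwi, Polynomial.eval_mul, ← hvc i, pow_succ]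
    ring
  simp only [key]
  by_cases hfh : f * h = 0
  · simp [hfh]
  · have hf0 : f ≠ 0 := fun h0 => hfh (by simp [h0])
    have hh0 : h ≠ 0 := fun h0 => hfh (by simp [h0])
    have h1 : f.natDegree < k := (Polynomial.natDegree_lt_iff_degree_lt hf0).mpr hf
    have h2 : h.natDegree < n - k := (Polynomial.natDegree_lt_iff_degree_lt hh0).mpr hh
    have hmul : (f * h).natDegree = f.natDegree + h.natDegree :=
      Polynomial.natDegree_mul hf0 hh0
    have hdeg : (f * h).natDegree < n - 1 := by omega
    calc ∑ i, c i * (f * h).eval (a i)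
        = ∑ i, c i * ∑ j ∈ Finset.range (n - 1), (f * h).coeff j * (a i) ^ j := by
          refine Finset.sum_congr rfl fun i _ => ?_
          rw [Polynomial.eval_eq_sum_range' hdeg]
      _ = ∑ j ∈ Finset.range (n - 1), ∑ i, c i * ((f * h).coeff j * (a i) ^ j) := by
          simp only [Finset.mul_sum]
          exact Finset.sum_comm
      _ = 0 := by
          apply Finset.sum_eq_zero
          intro j hj
          have hz := hsol j (Finset.mem_range.mp hj)
          calc ∑ i, c i * ((f * h).coeff j * (a i) ^ j)
              = (f * h).coeff j * ∑ i, (a i) ^ j * c i := by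
                rw [Finset.mul_sum]
                exact Finset.sum_congr rfl fun i _ => by ring
            _ = 0 := by rw [hz, mul_zero]
end

section
/- With the setup of Hermitian self-orthogonal GRS codes: if α_1,...,α_n are distinct in F_{q^2}, (c_1,...,c_n) ∈ (F_q^*)^n solves the Vandermonde system Σ_i α_i^j x_i = 0 for j=0,...,n-2, v_i^{q+1} = c_i, and k satisfies q(k-1)+1 ≤ n-k, then GRS_k(a,v) is Hermitian self-orthogonal. -/
/-- Corollary 3.2(i): with `α₁, …, α_n` distinct, a nonzero solution
`c ∈ (F_q^*)ⁿ` of the Vandermonde system `Σᵢ αᵢʲ xᵢ = 0` (`j = 0, …, n-2`),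
`vᵢ^{q+1} = cᵢ`, and `q(k-1) + 1 ≤ n - k`, the code `GRS_k(a,v)` is Hermitian
self-orthogonal. -/
theorem stmt11 {F : Type*} [Field F] [Fintype F] (q n k : ℕ) (hF : Fintype.card F = q ^ 2)
    (a v c : Fin n → F) (ha : Function.Injective a)
    (hcFq : ∀ i, (c i) ^ q = c i) (hcne : ∀ i, c i ≠ 0)
    (hsol : ∀ j : ℕ, j < n - 1 → ∑ i, (a i) ^ j * c i = 0)
    (hvc : ∀ i, (v i) ^ (q + 1) = c i)
    (hk : q * (k - 1) + 1 ≤ n - k) :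
    ∀ b ∈ GRS n k a v, ∀ w ∈ GRS n k a v, ∑ i, b i * (w i) ^ q = 0 := by
  rintro b ⟨f, hf, rfl⟩ w ⟨g, hg, rfl⟩
  -- q is a power of the characteristic
  set p := ringChar F with hp
  have hpprime : p.Prime := CharP.char_is_prime F p
  haveI : Fact p.Prime := ⟨hpprime⟩
  obtain ⟨m, -, hm⟩ := FiniteField.card F p
  rw [hF] at hm
  have hqdvd : q ∣ p ^ (m : ℕ) := hm ▸ Dvd.intro q (by ring)
  obtain ⟨t, -, hqt⟩ := (Nat.dvd_prime_pow hpprime).mp hqdvd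
  have hq2 : 2 ≤ q := by
    have h1 : 1 < q ^ 2 := hF ▸ Fintype.one_lt_card
    nlinarith
  -- k = 0 case : codewords are zero
  rcases k with _ | k'
  · have hf0 : f = 0 := by
      rw [Nat.cast_zero, Nat.WithBot.lt_zero_iff] at hf
      exact Polynomial.degree_eq_bot.mp hf
    simp [hf0]
  -- main case
  have hfd : f.natDegree ≤ k' := by
    rcases eq_or_ne f 0 with rfl | h0
    · simp
    · exact Nat.lt_succ_iff.mp ((Polynomial.natDegree_lt_iff_degree_lt h0).mpr
        (by exact_mod_cast hf))
  have hgd : g.natDegree ≤ k' := by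
    rcases eq_or_ne g 0 with rfl | h0
    · simp
    · exact Nat.lt_succ_iff.mp ((Polynomial.natDegree_lt_iff_degree_lt h0).mpr
        (by exact_mod_cast hg))
  set φ := iterateFrobenius F p t with hφdef
  have hφ : ∀ x : F, φ x = x ^ q := fun x => by
    rw [hφdef, iterateFrobenius_def, ← hqt]
  set h : Polynomial F := (g.map φ).comp (Polynomial.X ^ q) with hh
  have heval : ∀ x : F, h.eval x = (g.eval x) ^ q := by
    intro x
    rw [hh, Polynomial.eval_comp, Polynomial.eval_pow, Polynomial.eval_X, ← hφ x,
      Polynomial.eval_map, Polynomial.eval₂_hom, hφ]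
  have hhd : h.natDegree ≤ q * k' := by
    calc h.natDegree ≤ (g.map φ).natDegree * (Polynomial.X ^ q : Polynomial F).natDegree :=
          Polynomial.natDegree_comp_le
      _ ≤ k' * q := by
          rw [Polynomial.natDegree_X_pow]
          exact Nat.mul_le_mul_right q (le_trans Polynomial.natDegree_map_le hgd)
      _ = q * k' := Nat.mul_comm _ _
  simp only [Nat.add_sub_cancel] at hk
  have hn : k' + 1 < n := by
    have h1 : 1 ≤ n - (k' + 1) := le_trans (Nat.le_add_left _ _) hk
    omega
  have hPd : (f * h).natDegree < n - 1 := by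
    have h1 := Polynomial.natDegree_mul_le (p := f) (q := h)
    omega
  have key : ∀ i, (v i * f.eval (a i)) * (v i * g.eval (a i)) ^ q
      = (f * h).eval (a i) * c i := by
    intro i
    rw [Polynomial.eval_mul, heval, ← hvc i, mul_pow, pow_succ]
    ring
  calc ∑ i, (v i * f.eval (a i)) * (v i * g.eval (a i)) ^ q
      = ∑ i, (f * h).eval (a i) * c i := Finset.sum_congr rfl fun i _ => key i
    _ = ∑ i, ∑ j ∈ Finset.range (n - 1), (f * h).coeff j * (a i) ^ j * c i := by
        refine Finset.sum_congr rfl fun i _ => ?_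
        rw [Polynomial.eval_eq_sum_range' hPd, Finset.sum_mul]
    _ = ∑ j ∈ Finset.range (n - 1), (f * h).coeff j * ∑ i, (a i) ^ j * c i := by
        rw [Finset.sum_comm]
        exact Finset.sum_congr rfl fun j _ => by
          rw [Finset.mul_sum]
          exact Finset.sum_congr rfl fun i _ => by ring
    _ = 0 := Finset.sum_eq_zero fun j hj => by
        rw [hsol j (Finset.mem_range.mp hj), mul_zero]
end

section
/- Let α_1,...,α_n be the n distinct roots of x^n - x in F_{q^2} (assuming they all lie in F_{q^2}), and a = (α_1,...,α_n). If {q·i mod (n-1) : 1 ≤ i ≤ k-1} ⊆ {0,1,...,n-k-1}, then GRS_k(a,v)^q ⊆ GRS_{n-k}(a,v^q) for every v ∈ (F_{q^2}^*)^n. -/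
/-- Lemma 3.6: let `α₁, …, α_n` be the `n` distinct roots of `xⁿ - x` in `F_{q²}`.
If `{q·i mod (n-1) : 1 ≤ i ≤ k-1} ⊆ {0, 1, …, n-k-1}`, then
`GRS_k(a,v)ᵠ ⊆ GRS_{n-k}(a,vᵠ)` for every `v ∈ (F_{q²}^*)ⁿ`. -/
theorem stmt13 {F : Type*} [Field F] [Fintype F] (q n k : ℕ) (hF : Fintype.card F = q ^ 2)
    (a : Fin n → F) (hinj : Function.Injective a)
    (hall : ∀ x : F, x ^ n = x ↔ ∃ i, a i = x)
    (hmod : ∀ i ∈ Finset.Icc 1 (k - 1), q * i % (n - 1) ∈ Finset.range (n - k)) :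
    ∀ v : Fin n → F, (∀ i, v i ≠ 0) →
      ∀ w ∈ GRS n k a v, (fun i => (w i) ^ q) ∈ GRS n (n - k) a (fun i => (v i) ^ q) := by
  classical
  intro v hv w hw
  obtain ⟨f, hfdeg, rfl⟩ := hw
  have hcardpos : 0 < Fintype.card F := Fintype.card_pos
  have hq1 : 1 ≤ q := by by_contra h; push_neg at h; interval_cases q <;> omega
  -- trivial case n = 0
  rcases Nat.eq_zero_or_pos n with rfl | hn0
  · exact ⟨0, by simpa using WithBot.bot_lt_coe (0 - k), funext fun i => i.elim0⟩
  -- n = 1 is contradictory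
  by_cases hn1 : n = 1
  · exfalso
    subst hn1
    obtain ⟨i0, hi0⟩ := (hall 0).1 (by simp)
    obtain ⟨i1, hi1⟩ := (hall 1).1 (by simp)
    have : a i0 = a i1 := congrArg a (Subsingleton.elim _ _)
    rw [hi0, hi1] at this
    exact zero_ne_one this
  have hn2 : 2 ≤ n := by omega
  -- basic facts about the roots
  have hroot : ∀ j, (a j) ^ n = a j := fun j => (hall _).2 ⟨j, rfl⟩
  have hpow1 : ∀ j, a j ≠ 0 → (a j) ^ (n - 1) = 1 := by
    intro j hj
    have h1 : (a j) ^ (n - 1) * a j = 1 * a j := by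
      rw [one_mul, ← pow_succ]
      have : n - 1 + 1 = n := by omega
      rw [this]; exact hroot j
    exact mul_right_cancel₀ hj h1
  have hpow2 : ∀ j, a j ≠ 0 → (a j) ^ (q ^ 2 - 1) = 1 := by
    intro j hj
    have h1 : (a j) ^ (q ^ 2 - 1) * a j = 1 * a j := by
      rw [one_mul, ← pow_succ]
      have hq2 : 1 ≤ q ^ 2 := Nat.one_le_pow _ _ (by omega)
      have : q ^ 2 - 1 + 1 = q ^ 2 := by omega
      rw [this, ← hF]; exact FiniteField.pow_card (a j)
    exact mul_right_cancel₀ hj h1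
  -- (n-1) divides q^2 - 1
  set g := Nat.gcd (n - 1) (q ^ 2 - 1) with hg
  have hgpos : 0 < g := Nat.gcd_pos_of_pos_left _ (by omega)
  have hmemroots : ∀ j, a j ≠ 0 → a j ∈ (Polynomial.nthRoots g (1 : F)).toFinset := by
    intro j hj
    rw [Multiset.mem_toFinset, Polynomial.mem_nthRoots hgpos]
    have o1 := orderOf_dvd_of_pow_eq_one (hpow1 j hj)
    have o2 := orderOf_dvd_of_pow_eq_one (hpow2 j hj)
    exact orderOf_dvd_iff_pow_eq_one.1 (Nat.dvd_gcd o1 o2)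
  obtain ⟨j0, hj0⟩ := (hall 0).1 (by rw [zero_pow (by omega : n ≠ 0)])
  have hfiltercard : (Finset.univ.filter (fun j => a j ≠ 0)).card = n - 1 := by
    have heq : Finset.univ.filter (fun j : Fin n => a j = 0) = {j0} := by
      ext j
      simp only [Finset.mem_filter, Finset.mem_singleton, Finset.mem_univ, true_and]
      constructor
      · intro h; exact hinj (h.trans hj0.symm)
      · rintro rfl; exact hj0
    have h2 := Finset.card_filter_add_card_filter_not
      (s := (Finset.univ : Finset (Fin n))) (p := fun j => a j = 0)
    rw [heq, Finset.card_singleton, Finset.card_univ, Fintype.card_fin] at h2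
    simp only [ne_eq]
    omega
  have hcount : n - 1 ≤ g := by
    have hsub : (Finset.univ.filter (fun j => a j ≠ 0)).image a ⊆
        (Polynomial.nthRoots g (1 : F)).toFinset := by
      intro x hx
      simp only [Finset.mem_image, Finset.mem_filter] at hx
      obtain ⟨j, ⟨-, hj⟩, rfl⟩ := hx
      exact hmemroots j hj
    calc n - 1 = ((Finset.univ.filter (fun j => a j ≠ 0)).image a).card := by
          rw [Finset.card_image_of_injective _ hinj, hfiltercard]
      _ ≤ (Polynomial.nthRoots g (1 : F)).toFinset.card := Finset.card_le_card hsub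
      _ ≤ Multiset.card (Polynomial.nthRoots g (1 : F)) := Multiset.toFinset_card_le _
      _ ≤ g := Polynomial.card_nthRoots g 1
  have hdvd : (n - 1) ∣ q ^ 2 - 1 := by
    have hle : g ≤ n - 1 := Nat.le_of_dvd (by omega) (Nat.gcd_dvd_left _ _)
    have : g = n - 1 := le_antisymm hle hcount
    rw [← this]; exact Nat.gcd_dvd_right _ _
  -- coprimality
  have hcop : Nat.Coprime (n - 1) q := by
    have hc1 : Nat.Coprime (q ^ 2) (q ^ 2 - 1) := by
      have hq2 : 1 ≤ q ^ 2 := Nat.one_le_pow _ _ (by omega)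
      have h : q ^ 2 = 1 + (q ^ 2 - 1) := by omega
      show Nat.gcd (q ^ 2) (q ^ 2 - 1) = 1
      calc Nat.gcd (q ^ 2) (q ^ 2 - 1)
          = Nat.gcd (1 + (q ^ 2 - 1)) (q ^ 2 - 1) := by rw [← h]
        _ = Nat.gcd 1 (q ^ 2 - 1) := Nat.gcd_add_self_left _ _
        _ = 1 := Nat.gcd_one_left _
    have hc2 : Nat.Coprime (n - 1) (q ^ 2) := Nat.Coprime.coprime_dvd_left hdvd hc1.symm
    exact Nat.Coprime.coprime_dvd_right (dvd_pow_self q two_ne_zero) hc2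
  -- nonvanishing of the exponents
  have henz : ∀ i, 1 ≤ i → i ≤ k - 1 → q * i % (n - 1) ≠ 0 := by
    intro i h1 h2 h0
    have hd : (n - 1) ∣ q * i := Nat.dvd_of_mod_eq_zero h0
    have hdi : (n - 1) ∣ i := hcop.dvd_of_dvd_mul_left hd
    have : n - 1 ≤ i := Nat.le_of_dvd (by omega) hdi
    have hk : n ≤ k := by omega
    have := hmod i (Finset.mem_Icc.2 ⟨h1, h2⟩)
    rw [Finset.mem_range] at this
    omega
  have hnk : 1 ≤ n - k := by
    rcases le_or_gt k 1 with h | h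
    · omega
    · have := hmod 1 (Finset.mem_Icc.2 ⟨le_refl 1, by omega⟩)
      rw [Finset.mem_range] at this
      omega
  -- Frobenius
  haveI : CharP F (ringChar F) := ringChar.charP F
  obtain ⟨m, hp, hcard⟩ := FiniteField.card F (ringChar F)
  have hqdvd : q ∣ (ringChar F) ^ (m : ℕ) := by
    rw [← hcard, hF]; exact dvd_pow_self q two_ne_zero
  obtain ⟨e, -, hqe⟩ := (Nat.dvd_prime_pow hp).1 hqdvd
  haveI : ExpChar F (ringChar F) := ExpChar.prime hp
  set ψ : F →+* F := iterateFrobenius F (ringChar F) e with hψdef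
  have hψ : ∀ x : F, ψ x = x ^ q := by
    intro x; rw [hψdef, iterateFrobenius_def, ← hqe]
  -- case k = 0
  by_cases hk0 : k = 0
  · subst hk0
    have hf0 : f = 0 := by
      rw [Nat.cast_zero, Nat.WithBot.lt_zero_iff, Polynomial.degree_eq_bot] at hfdeg
      exact hfdeg
    refine ⟨0, by rw [Polynomial.degree_zero]; exact WithBot.bot_lt_coe _, ?_⟩
    funext i
    rw [hf0]
    simp [zero_pow (show q ≠ 0 by omega)]
  have hnat : f.natDegree < k := by
    rcases eq_or_ne f 0 with rfl | hf
    · simpa using Nat.pos_of_ne_zero hk0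
    · exact (Polynomial.natDegree_lt_iff_degree_lt hf).2 hfdeg
  -- the certificate polynomial
  set E : ℕ → ℕ := fun i => q * i % (n - 1) with hE
  set h : Polynomial F :=
    ∑ i ∈ Finset.range k, Polynomial.C ((f.coeff i) ^ q) * Polynomial.X ^ (E i) with hh
  have hdeg : h.degree < ((n - k : ℕ) : WithBot ℕ) := by
    refine lt_of_le_of_lt (Polynomial.degree_sum_le _ _) ?_
    rw [Finset.sup_lt_iff (WithBot.bot_lt_coe _)]
    intro i hi
    refine lt_of_le_of_lt (Polynomial.degree_C_mul_X_pow_le _ _) ?_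
    rw [Nat.cast_lt]
    rcases Nat.eq_zero_or_pos i with rfl | hi1
    · simp [hE]
      omega
    · have hik : i ≤ k - 1 := by
        rw [Finset.mem_range] at hi; omega
      have := hmod i (Finset.mem_Icc.2 ⟨hi1, hik⟩)
      rw [Finset.mem_range] at this
      exact this
  have heval : ∀ j, h.eval (a j) = (f.eval (a j)) ^ q := by
    intro j
    have hpow : ∀ i ∈ Finset.range k, (a j) ^ (E i) = (a j) ^ (q * i) := by
      intro i hi
      rcases eq_or_ne (a j) 0 with hz | hz
      · rcases Nat.eq_zero_or_pos i with rfl | hi1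
        · simp [hE]
        · have hik : i ≤ k - 1 := by rw [Finset.mem_range] at hi; omega
          rw [hz, zero_pow (henz i hi1 hik), zero_pow (by positivity)]
      · exact (pow_eq_pow_mod (q * i) (hpow1 j hz)).symm
    rw [hh, Polynomial.eval_finset_sum]
    simp only [Polynomial.eval_mul, Polynomial.eval_pow, Polynomial.eval_C, Polynomial.eval_X]
    rw [Polynomial.eval_eq_sum_range' hnat, ← hψ, map_sum]
    apply Finset.sum_congr rfl
    intro i hi
    rw [map_mul, hψ, hψ, hpow i hi, ← pow_mul, mul_comm i q]
  exact ⟨h, hdeg, funext fun i => by rw [mul_pow, heval i]⟩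
end

section
/- Let q be a prime power with q+1 ≡ r (mod 2r) for some 0 < r < q+1. Then for any k ≤ (q-1+r)/2, there exists a Hermitian self-orthogonal [n, k, n-k+1] MDS code over F_{q^2} with n = r(q-1)+1. -/
theorem keyArith (q r k s t : ℕ) (hq2 : 2 ≤ q) (hr : 0 < r)
    (hrq : r < q + 1) (hmod : (q + 1) % (2 * r) = r) (hk : 2 * k ≤ q - 1 + r)
    (hs : s < k) (ht : t < k) (hdvd : r * (q - 1) ∣ s + q * t) :
    s = 0 ∧ t = 0 := by
  obtain ⟨c, hc⟩ := hdvd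
  obtain ⟨Q, rfl⟩ : ∃ Q, q = Q + 1 := ⟨q - 1, by omega⟩
  have hQ : 1 ≤ Q := by omega
  rw [Nat.add_sub_cancel] at hc hk
  -- q + 1 = r * m with m = 2j+1 odd
  have hdm := Nat.div_add_mod (Q + 1 + 1) (2 * r)
  rw [hmod] at hdm
  obtain ⟨j, hj⟩ : ∃ j, j = (Q + 1 + 1) / (2 * r) := ⟨_, rfl⟩
  rw [← hj] at hdm
  have hdm' : 2 * (r * j) + r = Q + 2 := by
    have : 2 * r * j = 2 * (r * j) := by ring
    omega
  have h1 : s + t + Q * t = r * Q * c := by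
    have : (Q + 1) * t = Q * t + t := by ring
    omega
  rcases Nat.eq_zero_or_pos c with rfl | hcpos
  · have : r * Q * 0 = 0 := by ring
    omega
  have htrc : t ≤ r * c := by
    by_contra h
    push_neg at h
    have h' : r * c + 1 ≤ t := h
    have h2 := Nat.mul_le_mul_left Q h'
    have h3 : Q * (r * c + 1) = r * Q * c + Q := by ring
    omega
  obtain ⟨d, hd⟩ : ∃ d, r * c = t + d := ⟨r * c - t, by omega⟩
  have h2 : s + t = Q * d := by
    have hB : r * Q * c = Q * t + Q * d := by
      rw [show r * Q * c = Q * (r * c) from by ring, hd]; ring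
    omega
  rcases Nat.eq_zero_or_pos d with rfl | hdpos
  · have : Q * 0 = 0 := by ring
    omega
  have hd1 : d = 1 := by
    by_contra h
    have h3 := Nat.mul_le_mul_left Q (show 2 ≤ d by omega)
    have h4 : Q * 2 = 2 * Q := by ring
    omega
  subst hd1
  have hst' : s + t = Q := by omega
  have htc : t + 1 = r * c := by omega
  -- s + 1 = r * (m - c) where m = 2j+1
  have hm : Q + 2 = r * (2 * j + 1) := by
    have : r * (2 * j + 1) = 2 * (r * j) + r := by ring
    omega
  have hcm : c ≤ 2 * j + 1 := by
    have : t + 1 ≤ Q + 2 := by omega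
    have h5 : r * c ≤ r * (2 * j + 1) := by omega
    exact Nat.le_of_mul_le_mul_left h5 hr
  obtain ⟨a, ha⟩ : ∃ a, 2 * j + 1 = c + a := ⟨2 * j + 1 - c, by omega⟩
  have hsc : s + 1 = r * a := by
    have : r * (2 * j + 1) = r * c + r * a := by rw [ha]; ring
    omega
  have hapos : 0 < a := by
    rcases Nat.eq_zero_or_pos a with rfl | h
    · have : r * 0 = 0 := by ring
      omega
    · exact h
  have hne : a ≠ c := by
    intro h; omega
  rcases Nat.lt_or_ge a c with h | h
  · have hcge : j + 1 ≤ c := by omega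
    have h6 := Nat.mul_le_mul_left r hcge
    have h7 : r * (j + 1) = r * j + r := by ring
    omega
  · have hage : j + 1 ≤ a := by omega
    have h6 := Nat.mul_le_mul_left r hage
    have h7 : r * (j + 1) = r * j + r := by ring
    omega

theorem geomSumZero {F : Type*} [Field F] {x : F} {N : ℕ} (hx1 : x ≠ 1) (hxN : x ^ N = 1) :
    ∑ i ∈ Finset.range N, x ^ i = 0 := by
  have h := geom_sum_mul x N
  rw [hxN, sub_self] at h
  rcases mul_eq_zero.mp h with h' | h'
  · exact h'
  · exact absurd (sub_eq_zero.mp h') hx1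

/-- Theorem 3.7: let `q` be a prime power and `0 < r < q + 1` with
`q + 1 ≡ r (mod 2r)`.  Then for any `k ≤ (q - 1 + r)/2` there is a Hermitian
self-orthogonal `[n, k, n - k + 1]` MDS code over `F_{q²}` with `n = r(q-1) + 1`. -/
theorem stmt15 {F : Type*} [Field F] [Fintype F] (q r k : ℕ) (hF : Fintype.card F = q ^ 2)
    (hq : IsPrimePow q) (hr : 0 < r) (hrq : r < q + 1)
    (hmod : (q + 1) % (2 * r) = r) (hk : 2 * k ≤ q - 1 + r) :
    ∃ C : Submodule F (Fin (r * (q - 1) + 1) → F),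
      Module.finrank F C = k ∧
      (∀ c ∈ C, c ≠ 0 → r * (q - 1) + 1 - k + 1 ≤ {i | c i ≠ 0}.ncard) ∧
      (∀ b ∈ C, ∀ c ∈ C, ∑ i, b i * (c i) ^ q = 0) := by
  classical
  obtain ⟨p, e, hpp, hep, hpe⟩ := hq
  have hpp' : p.Prime := hpp.nat_prime
  have hq2 : 2 ≤ q := by
    rw [← hpe]
    calc 2 ≤ p := hpp'.two_le
    _ = p ^ 1 := (pow_one p).symm
    _ ≤ p ^ e := Nat.pow_le_pow_right hpp'.pos hep
  -- characteristic
  haveI hcharF : CharP F p := by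
    haveI := ringChar.charP F
    obtain ⟨n, hn, hcard⟩ := FiniteField.card F (ringChar F)
    have hdvd : p ∣ ringChar F := by
      have h1 : p ∣ Fintype.card F := by
        rw [hF, ← hpe]
        exact dvd_pow (dvd_pow_self p hep.ne') (by norm_num : (2:ℕ) ≠ 0)
      rw [hcard] at h1
      exact hpp'.dvd_of_dvd_pow h1
    have : p = ringChar F := ((Nat.prime_dvd_prime_iff_eq hpp' hn).mp hdvd)
    rw [this]; exact ringChar.charP F
  have hq0F : (q : F) = 0 := by
    rw [← hpe]
    push_cast
    rw [CharP.cast_eq_zero F p]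
    exact zero_pow hep.ne'
  -- r ∣ q + 1 with odd quotient
  have hdm := Nat.div_add_mod (q + 1) (2 * r)
  rw [hmod] at hdm
  set m := 2 * ((q + 1) / (2 * r)) + 1 with hmdef
  have hm : q + 1 = r * m := by
    have h1 : 2 * r * ((q + 1) / (2 * r)) = r * (2 * ((q + 1) / (2 * r))) := by ring
    have h2 : r * (2 * ((q + 1) / (2 * r)) + 1) = r * (2 * ((q + 1) / (2 * r))) + r := by ring
    rw [hmdef]; omega
  have hrdvd : r ∣ q + 1 := ⟨m, hm⟩
  -- (r : F) ≠ 0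
  have hrF : (r : F) ≠ 0 := by
    intro h
    have hpr : p ∣ r := (CharP.cast_eq_zero_iff F p r).mp h
    have hpq : p ∣ q := by rw [← hpe]; exact dvd_pow_self p hep.ne'
    have h3 : p ∣ q + 1 := hpr.trans hrdvd
    have h4 : p ∣ 1 := by
      have h5 := Nat.dvd_sub h3 hpq
      simpa using h5
    exact (Nat.Prime.one_lt hpp').ne' (Nat.dvd_one.mp h4)
  set N := r * (q - 1) with hNdef
  clear_value N
  have hNpos : 0 < N := by
    have : 1 ≤ q - 1 := by omega
    rw [hNdef]
    exact Nat.mul_pos hr this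
  have hNF : (N : F) = -(r : F) := by
    rw [hNdef]
    push_cast [Nat.cast_sub (by omega : 1 ≤ q)]
    rw [hq0F]; ring
  -- natural casts are fixed by x ^ q
  haveI hfact : Fact p.Prime := ⟨hpp'⟩
  have hfrobpow : ∀ (x : F) (n : ℕ), x ^ p = x → x ^ (p ^ n) = x := by
    intro x n hx
    induction n with
    | zero => simp
    | succ n' ih => rw [pow_succ, pow_mul, ih]; exact hx
  have hcastq : ∀ n : ℕ, ((n : F)) ^ q = n := by
    intro n
    rw [← hpe]
    apply hfrobpow
    have := map_natCast (frobenius F p) n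
    rwa [frobenius_def] at this
  -- Fˣ facts
  have hcardU : Fintype.card Fˣ = q ^ 2 - 1 := by
    rw [Fintype.card_units, hF]
  have hq21 : q ^ 2 - 1 = (q - 1) * (q + 1) := by
    obtain ⟨Q, hQ⟩ : ∃ Q, q = Q + 1 := ⟨q - 1, by omega⟩
    subst hQ
    have h1 : (Q + 1) ^ 2 = Q * Q + 2 * Q + 1 := by ring
    have h2 : (Q + 1 - 1) * (Q + 1 + 1) = Q * Q + 2 * Q := by
      simp only [Nat.add_sub_cancel]; ring
    omega
  have hq21pos : 0 < q ^ 2 - 1 := by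
    have h1 : 2 * 2 ≤ q * q := Nat.mul_le_mul hq2 hq2
    have h2 : q ^ 2 = q * q := sq q
    omega
  have hNdvd : N ∣ q ^ 2 - 1 := by
    rw [hq21, hm, hNdef]
    exact ⟨m, by ring⟩
  obtain ⟨g, hg⟩ := IsCyclic.exists_monoid_generator (α := Fˣ)
  have hog : orderOf g = q ^ 2 - 1 := by
    rw [orderOf_eq_card_of_forall_mem_zpowers (fun x => ?_), Nat.card_eq_fintype_card, hcardU]
    obtain ⟨n, hn⟩ := hg x
    rw [Subgroup.mem_zpowers_iff]
    exact ⟨(n : ℤ), by rw [zpow_natCast]; exact hn⟩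
  -- the primitive N-th root of unity
  set zu : Fˣ := g ^ ((q ^ 2 - 1) / N) with hzudef
  have hozu : orderOf zu = N := by
    rw [hzudef, orderOf_pow, hog, Nat.gcd_eq_right (Nat.div_dvd_of_dvd hNdvd),
      Nat.div_div_self hNdvd hq21pos.ne']
  set ζ : F := (zu : F) with hzdef
  have hzpow : ∀ a b : ℕ, (ζ ^ a = ζ ^ b ↔ (zu ^ a : Fˣ) = zu ^ b) := by
    intro a b
    rw [hzdef, ← Units.val_pow_eq_pow_val, ← Units.val_pow_eq_pow_val]
    exact ⟨fun h => Units.ext h, fun h => congrArg Units.val h⟩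
  have hzone : ∀ a : ℕ, (ζ ^ a = 1 ↔ N ∣ a) := by
    intro a
    rw [← hozu, orderOf_dvd_iff_pow_eq_one]
    constructor
    · intro h
      apply Units.ext
      rw [Units.val_pow_eq_pow_val, Units.val_one]
      exact h
    · intro h
      have h2 := congrArg Units.val h
      rw [Units.val_pow_eq_pow_val, Units.val_one] at h2
      exact h2
  have hzN : ζ ^ N = 1 := (hzone N).mpr dvd_rfl
  have hz0 : ζ ≠ 0 := zu.ne_zero
  -- the weight w with w ^ (q + 1) = r
  obtain ⟨w, hw⟩ : ∃ w : F, w ^ (q + 1) = (r : F) := by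
    set cu : Fˣ := Units.mk0 (r : F) hrF with hcudef
    obtain ⟨a, ha⟩ := hg cu
    have hcu1 : cu ^ (q - 1) = 1 := by
      have h1 : ((r : F)) ^ q = (r : F) := hcastq r
      have h2 : (r : F) ^ (q - 1) * (r : F) = (r : F) ^ q := by
        rw [← pow_succ]; congr 1; omega
      have h3 : (r : F) ^ (q - 1) * (r : F) = 1 * (r : F) := by rw [h2, h1, one_mul]
      have h4 : (r : F) ^ (q - 1) = 1 := mul_right_cancel₀ hrF h3
      apply Units.ext
      rw [Units.val_pow_eq_pow_val, Units.val_one, hcudef, Units.val_mk0]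
      exact h4
    have ha' : g ^ a = cu := ha
    have hga : g ^ (a * (q - 1)) = 1 := by
      rw [pow_mul, ha', hcu1]
    have hdvd2 : q ^ 2 - 1 ∣ a * (q - 1) := by
      rw [← hog]; exact orderOf_dvd_of_pow_eq_one hga
    obtain ⟨b, hb⟩ := hdvd2
    have hq21' : q ^ 2 - 1 = (q + 1) * (q - 1) := by rw [hq21]; ring
    have hab : a = (q + 1) * b := by
      have h3 : a * (q - 1) = ((q + 1) * b) * (q - 1) := by
        rw [hb, hq21']; ring
      exact Nat.eq_of_mul_eq_mul_right (by omega) h3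
    refine ⟨((g ^ b : Fˣ) : F), ?_⟩
    have : (g ^ b) ^ (q + 1) = cu := by
      rw [← pow_mul, mul_comm, ← hab, ha']
    rw [← Units.val_pow_eq_pow_val, this]
    rfl
  have hw0 : w ≠ 0 := by
    intro h
    rw [h, zero_pow (by omega : q + 1 ≠ 0)] at hw
    exact hrF hw.symm
  -- evaluation points and weights
  set aa : Fin (N + 1) → F := Fin.cases 0 (fun i : Fin N => ζ ^ (i : ℕ)) with haadef
  set vv : Fin (N + 1) → F := Fin.cases w (fun _ => 1) with hvvdef
  have haa0 : aa 0 = 0 := rfl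
  have haasucc : ∀ i : Fin N, aa i.succ = ζ ^ (i : ℕ) := fun i => rfl
  have hvv0 : vv 0 = w := rfl
  have hvvsucc : ∀ i : Fin N, vv i.succ = 1 := fun i => rfl
  have hvv_ne : ∀ j, vv j ≠ 0 := by
    intro j
    induction j using Fin.cases with
    | zero => exact hw0
    | succ i => rw [hvvsucc]; exact one_ne_zero
  have haainj : Function.Injective aa := by
    intro x y hxy
    induction x using Fin.cases with
    | zero =>
      induction y using Fin.cases with
      | zero => rfl
      | succ j =>
        rw [haa0, haasucc] at hxy
        exact absurd hxy.symm (pow_ne_zero _ hz0)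
    | succ i =>
      induction y using Fin.cases with
      | zero =>
        rw [haa0, haasucc] at hxy
        exact absurd hxy (pow_ne_zero _ hz0)
      | succ j =>
        rw [haasucc, haasucc] at hxy
        have h1 : (zu ^ (i : ℕ) : Fˣ) = zu ^ (j : ℕ) := (hzpow _ _).mp hxy
        have h2 : (i : ℕ) = (j : ℕ) := by
          apply pow_injOn_Iio_orderOf (by rw [hozu]; exact i.2) (by rw [hozu]; exact j.2)
          exact h1
        rw [Fin.ext_iff] at *
        simpa [h2] using rfl
  have hkN : k ≤ N + 1 := by
    have : q - 1 ≤ N := by rw [hNdef]; exact Nat.le_mul_of_pos_left _ hr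
    omega
  -- the linear map
  set φ : (Fin k → F) →ₗ[F] (Fin (N + 1) → F) :=
  { toFun := fun f j => vv j * ∑ i : Fin k, f i * aa j ^ (i : ℕ)
    map_add' := by
      intro f1 f2; funext j
      simp [add_mul, Finset.sum_add_distrib, mul_add]
    map_smul' := by
      intro a f; funext j
      simp [Finset.mul_sum, mul_assoc]
      exact Finset.sum_congr rfl fun i _ => by ring } with hφdef
  have hφapp : ∀ f j, φ f j = vv j * ∑ i : Fin k, f i * aa j ^ (i : ℕ) := fun f j => rfl
  -- the polynomial attached to f
  set P : (Fin k → F) → Polynomial F := fun f => ∑ i : Fin k, Polynomial.C (f i) * Polynomial.X ^ (i : ℕ) with hPdef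
  have hPeval : ∀ f x, (P f).eval x = ∑ i : Fin k, f i * x ^ (i : ℕ) := by
    intro f x
    rw [hPdef]
    simp [Polynomial.eval_finset_sum]
  have hPdeg : ∀ f, (P f).natDegree ≤ k - 1 := by
    intro f
    apply Polynomial.natDegree_sum_le_of_forall_le
    intro i _
    exact le_trans (Polynomial.natDegree_C_mul_X_pow_le _ _) (by omega)
  have hPcoeff : ∀ f (i : Fin k), (P f).coeff (i : ℕ) = f i := by
    intro f i
    rw [hPdef, Polynomial.finset_sum_coeff]
    have : ∀ b : Fin k, (Polynomial.C (f b) * Polynomial.X ^ (b : ℕ)).coeff (i : ℕ)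
        = if b = i then f b else 0 := by
      intro b
      rw [Polynomial.coeff_C_mul, Polynomial.coeff_X_pow]
      rcases eq_or_ne b i with rfl | hne
      · simp
      · rw [if_neg (show ¬((i : ℕ) = (b : ℕ)) from fun h => hne (Fin.ext h.symm)),
          if_neg hne, mul_zero]
    rw [Finset.sum_congr rfl (fun b _ => this b), Finset.sum_ite_eq' Finset.univ i]
    simp
  have hφinj : Function.Injective φ := by
    rw [← LinearMap.ker_eq_bot, LinearMap.ker_eq_bot']
    intro f hf
    have hPzero : P f = 0 := by
      apply Polynomial.eq_zero_of_natDegree_lt_card_of_eval_eq_zero (P f) haainj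
      · intro j
        have h1 : φ f j = 0 := by rw [hf]; rfl
        rw [hφapp] at h1
        rcases mul_eq_zero.mp h1 with h' | h'
        · exact absurd h' (hvv_ne j)
        · rw [hPeval]; exact h'
      · rw [Fintype.card_fin]
        exact lt_of_le_of_lt (hPdeg f) (by omega)
    funext i
    have := hPcoeff f i
    rw [hPzero] at this
    simpa using this.symm
  refine ⟨LinearMap.range φ, ?_, ?_, ?_⟩
  · rw [LinearMap.finrank_range_of_inj hφinj, Module.finrank_fin_fun]
  · -- distance
    rintro c ⟨f, rfl⟩ hc0
    have hk1 : 1 ≤ k := by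
      by_contra h
      apply hc0
      funext j
      rw [hφapp]
      have : (Finset.univ : Finset (Fin k)) = ∅ := by
        apply Finset.univ_eq_empty_iff.mpr
        constructor; intro i; exact absurd i.is_lt (by omega)
      rw [this]
      simp
    have hPne : P f ≠ 0 := by
      intro h
      apply hc0
      funext j
      rw [hφapp, ← hPeval, h]
      simp
    have hsubset : {i | φ f i = 0} ⊆ aa ⁻¹' ((P f).roots.toFinset : Set F) := by
      intro j hj
      simp only [Set.mem_setOf_eq] at hj
      rw [hφapp] at hj
      rcases mul_eq_zero.mp hj with h' | h'
      · exact absurd h' (hvv_ne j)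
      · simp only [Set.mem_preimage, Finset.coe_sort_coe, Multiset.mem_toFinset, Finset.mem_coe]
        rw [Polynomial.mem_roots hPne, Polynomial.IsRoot.def, hPeval]
        exact h'
    have hzcard : {i | φ f i = 0}.ncard ≤ k - 1 := by
      have h1 : {i | φ f i = 0}.ncard ≤ (((P f).roots.toFinset : Set F)).ncard := by
        exact Set.ncard_le_ncard_of_injOn aa (fun x hx => hsubset hx)
          (Function.Injective.injOn haainj) (Finset.finite_toSet _)
      rw [Set.ncard_coe_finset] at h1
      calc {i | φ f i = 0}.ncard ≤ (P f).roots.toFinset.card := h1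
        _ ≤ Multiset.card (P f).roots := Multiset.toFinset_card_le _
        _ ≤ (P f).natDegree := Polynomial.card_roots' (P f)
        _ ≤ k - 1 := hPdeg f
    have hcompl : {i | φ f i ≠ 0} = {i | φ f i = 0}ᶜ := by
      ext i; simp
    have htotal := Set.ncard_add_ncard_compl {i | φ f i = 0}
    rw [← hcompl] at htotal
    have hcardFin : Nat.card (Fin (N + 1)) = N + 1 := by simp
    rw [hcardFin] at htotal
    omega
  · -- Hermitian self-orthogonality
    rintro b ⟨f, rfl⟩ c ⟨g', rfl⟩
    -- key sum
    have hS : ∀ s t : ℕ, s < k → t < k →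
        ∑ j : Fin (N + 1), vv j ^ (q + 1) * aa j ^ (s + q * t) = 0 := by
      intro s t hs ht
      rw [Fin.sum_univ_succ]
      simp only [haa0, hvv0]
      have hterms : ∀ i : Fin N, vv i.succ ^ (q + 1) * aa i.succ ^ (s + q * t)
          = (ζ ^ (s + q * t)) ^ (i : ℕ) := by
        intro i
        rw [hvvsucc, haasucc, one_pow, one_mul, ← pow_mul, ← pow_mul, mul_comm]
      rw [Finset.sum_congr rfl (fun i _ => hterms i), Fin.sum_univ_eq_sum_range (fun i => (ζ ^ (s + q * t)) ^ i)]
      rcases eq_or_ne (s + q * t) 0 with hm0 | hm0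
      · rw [hm0]
        simp only [pow_zero, mul_one, one_pow]
        rw [Finset.sum_const, Finset.card_range, nsmul_eq_mul, hNF, hw]
        ring
      · have hndvd : ¬ (N ∣ s + q * t) := by
          intro hdvd
          rw [hNdef] at hdvd
          obtain ⟨hs0, ht0⟩ := keyArith q r k s t hq2 hr hrq hmod hk hs ht hdvd
          exact hm0 (by rw [hs0, ht0]; simp)
        have hz1 : ζ ^ (s + q * t) ≠ 1 := fun h => hndvd ((hzone _).mp h)
        have hzNm : (ζ ^ (s + q * t)) ^ N = 1 := by
          rw [← pow_mul, mul_comm, pow_mul, hzN, one_pow]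
        rw [geomSumZero hz1 hzNm, zero_pow hm0]
        ring
    -- expand
    have hgq : ∀ j, (φ g' j) ^ q = vv j ^ q * ∑ t : Fin k, (g' t) ^ q * aa j ^ (q * (t : ℕ)) := by
      intro j
      rw [hφapp, mul_pow]
      congr 1
      rw [← hpe, sum_pow_char_pow]
      apply Finset.sum_congr rfl
      intro t _
      rw [mul_pow, ← pow_mul, hpe, mul_comm (t : ℕ) q]
    calc ∑ j : Fin (N + 1), φ f j * (φ g' j) ^ q
        = ∑ j : Fin (N + 1), ∑ s : Fin k, ∑ t : Fin k,
            (f s * (g' t) ^ q) * (vv j ^ (q + 1) * aa j ^ ((s : ℕ) + q * (t : ℕ))) := by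
          apply Finset.sum_congr rfl
          intro j _
          rw [hgq, hφapp, mul_mul_mul_comm, Finset.sum_mul_sum, Finset.mul_sum]
          apply Finset.sum_congr rfl
          intro s _
          rw [Finset.mul_sum]
          apply Finset.sum_congr rfl
          intro t _
          rw [pow_add, pow_succ]
          ring
      _ = ∑ s : Fin k, ∑ t : Fin k,
            (f s * (g' t) ^ q) * ∑ j : Fin (N + 1), vv j ^ (q + 1) * aa j ^ ((s : ℕ) + q * (t : ℕ)) := by
          rw [Finset.sum_comm]
          apply Finset.sum_congr rfl
          intro s _
          rw [Finset.sum_comm]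
          apply Finset.sum_congr rfl
          intro t _
          rw [Finset.mul_sum]
      _ = 0 := by
          apply Finset.sum_eq_zero
          intro s _
          apply Finset.sum_eq_zero
          intro t _
          rw [hS (s : ℕ) (t : ℕ) s.2 t.2, mul_zero]
end

section
/- Let q be a prime power with 3 | (q+1). Then for any k ≤ (2q-1)/3, there exists a Hermitian self-orthogonal MDS code over F_{q^2} of length n = (q^2+2)/3 and dimension k. -/
open Polynomial in
noncomputable def grsMap (F : Type*) [Field F] (n k : ℕ) (w a : Fin n → F) :
    (Fin k → F) →ₗ[F] (Fin n → F) where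
  toFun d := fun i => w i * ∑ j : Fin k, d j * a i ^ (j : ℕ)
  map_add' d e := by
    funext i
    simp only [Pi.add_apply, add_mul, Finset.sum_add_distrib, mul_add]
  map_smul' c d := by
    funext i
    simp only [Pi.smul_apply, smul_eq_mul, RingHom.id_apply]
    rw [Finset.mul_sum]
    rw [Finset.mul_sum, Finset.mul_sum]
    refine Finset.sum_congr rfl fun j _ => by ring

/-- Corollary 3.8: if `3 ∣ q + 1`, then for any `k ≤ (2q - 1)/3` there is a Hermitian
self-orthogonal MDS code over `F_{q²}` of length `n = (q² + 2)/3` and dimension `k`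
(hence minimum distance `n - k + 1`). -/
theorem stmt16 {F : Type*} [Field F] [Fintype F] (q k : ℕ) (hF : Fintype.card F = q ^ 2)
    (hq : IsPrimePow q) (h3 : 3 ∣ q + 1) (hk : 3 * k ≤ 2 * q - 1) :
    ∃ C : Submodule F (Fin ((q ^ 2 + 2) / 3) → F),
      Module.finrank F C = k ∧
      (∀ c ∈ C, c ≠ 0 → (q ^ 2 + 2) / 3 - k + 1 ≤ {i | c i ≠ 0}.ncard) ∧
      (∀ b ∈ C, ∀ c ∈ C, ∑ i, b i * (c i) ^ q = 0) := by
  classical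
  have hq2 : 2 ≤ q := hq.two_le
  obtain ⟨r, hr⟩ := h3
  -- basic arithmetic facts
  have hqq : 2 * q ≤ q * q := Nat.mul_le_mul_right q hq2
  set N : ℕ := r * (q - 1) with hNdef
  have hN3 : 3 * N = q * q - 1 := by
    have h1 : 3 * N = (3 * r) * (q - 1) := by ring
    rw [h1, ← hr]
    zify [show 1 ≤ q by omega, show 1 ≤ q * q by nlinarith]
    ring
  have hkq : 3 * k ≤ 2 * q - 1 := hk
  have hn : (q ^ 2 + 2) / 3 = N + 1 := by
    have : q ^ 2 = q * q := sq q
    omega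
  rw [hn]
  -- characteristic
  obtain ⟨p, epow, hpp, hepos, hpe⟩ := hq
  have hp : p.Prime := Nat.prime_iff.mpr hpp
  haveI := Fact.mk hp
  haveI hcharP : CharP F p := by
    have hchar : CharP F (ringChar F) := ringChar.charP F
    have hprime : (ringChar F).Prime := CharP.char_is_prime F (ringChar F)
    have hdvd : ringChar F ∣ q ^ 2 := by
      have h0 : ((q ^ 2 : ℕ) : F) = 0 := by
        rw [← hF]; exact FiniteField.cast_card_eq_zero F
      exact (CharP.cast_eq_zero_iff F (ringChar F) (q ^ 2)).mp h0
    have hdvd2 : ringChar F ∣ p := by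
      have : ringChar F ∣ p ^ (epow * 2) := by
        rw [pow_mul, hpe]; exact hdvd
      exact hprime.dvd_of_dvd_pow this
    have : ringChar F = p := (Nat.prime_dvd_prime_iff_eq hprime hp).mp hdvd2
    rwa [this] at hchar
  -- Frobenius facts
  have hsumpow : ∀ (x : F) (m : ℕ) (ee : Fin m → F) (g : Fin m → F),
      (∑ t : Fin m, ee t * g t) ^ q = ∑ t : Fin m, ee t ^ q * g t ^ q := by
    intro x m ee g
    rw [← hpe, sum_pow_char_pow]
    exact Finset.sum_congr rfl fun t _ => by rw [mul_pow]
  have hcastq : ∀ j : ℕ, ((j : F)) ^ q = (j : F) := by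
    intro j
    rw [← hpe, ← iterateFrobenius_def, map_natCast]
  -- N is nonzero in F
  have hcardF : ((q ^ 2 : ℕ) : F) = 0 := by rw [← hF]; exact FiniteField.cast_card_eq_zero F
  have hqF0 : (q : F) * q = 0 := by
    have h := hcardF
    rw [show q ^ 2 = q * q from sq q] at h
    push_cast at h
    exact h
  have hNF : (3 : F) * (N : F) = -1 := by
    have h := congrArg (fun m : ℕ => (m : F)) hN3
    push_cast [Nat.cast_sub (show 1 ≤ q * q by nlinarith)] at h
    rw [h, hqF0]
    ring
  have hNne : ((N : F)) ≠ 0 := by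
    intro h
    rw [h, mul_zero] at hNF
    norm_num at hNF
  set u : F := -(N : F) with hudef
  have hune : u ≠ 0 := by simpa [hudef] using hNne
  have huq : u ^ q = u := by
    rw [hudef, ← hpe, ← iterateFrobenius_def, map_neg, map_natCast]
  have hu1 : u ^ (q - 1) = 1 := by
    have h1 : u ^ (q - 1) * u = u ^ q := by
      rw [← pow_succ]
      congr 1
      omega
    rw [huq] at h1
    have := mul_right_cancel₀ hune (h1.trans (one_mul u).symm)
    exact this
  -- cyclic generator
  obtain ⟨gu, hgu⟩ := IsCyclic.exists_generator (α := Fˣ)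
  have hgord : orderOf gu = q ^ 2 - 1 := by
    rw [orderOf_eq_card_of_forall_mem_zpowers hgu, Nat.card_units, Nat.card_eq_fintype_card, hF]
  -- norm surjectivity: find v0 with v0 ^ (q + 1) = u
  obtain ⟨v0, hv0⟩ : ∃ v : F, v ^ (q + 1) = u := by
    set uu : Fˣ := Units.mk0 u hune with huu
    obtain ⟨j, hj0⟩ := mem_powers_iff_mem_zpowers.mpr (hgu uu)
    have hj : gu ^ j = uu := hj0
    have huu1 : uu ^ (q - 1) = 1 := by
      ext
      push_cast
      exact hu1
    have hdvd : (q ^ 2 - 1) ∣ j * (q - 1) := by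
      rw [← hgord]
      apply orderOf_dvd_of_pow_eq_one
      rw [pow_mul, hj, huu1]
    obtain ⟨c, hc⟩ := hdvd
    have hq21 : q ^ 2 - 1 = (q + 1) * (q - 1) := by
      have : q ^ 2 = q * q := sq q
      zify [show 1 ≤ q by omega, show 1 ≤ q * q by nlinarith, this]
      ring
    have hjc : j = (q + 1) * c := by
      have h1 : j * (q - 1) = ((q + 1) * c) * (q - 1) := by
        rw [hc, hq21]; ring
      exact Nat.eq_of_mul_eq_mul_right (by omega) h1
    refine ⟨((gu ^ c : Fˣ) : F), ?_⟩
    have : (gu ^ c) ^ (q + 1) = uu := by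
      rw [← pow_mul, mul_comm c (q+1), ← hjc, hj]
    calc ((gu ^ c : Fˣ) : F) ^ (q + 1) = (((gu ^ c) ^ (q+1) : Fˣ) : F) := by push_cast; ring
      _ = u := by rw [this]; rfl
  -- the root of unity ζ of order N
  have hdvd3 : 3 ∣ q ^ 2 - 1 := ⟨N, by have : q ^ 2 = q * q := sq q; omega⟩
  have hNpos : 0 < N := by omega
  set ζ : F := ((gu ^ 3 : Fˣ) : F) with hζdef
  have hζord : orderOf ζ = N := by
    rw [hζdef, orderOf_units, orderOf_pow, hgord, Nat.gcd_eq_right hdvd3]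
    have : q ^ 2 = q * q := sq q
    omega
  have hζN : ζ ^ N = 1 := by rw [← hζord]; exact pow_orderOf_eq_one ζ
  have hζne : ζ ≠ 0 := Units.ne_zero _
  -- points and weights
  set a : Fin (N + 1) → F := Fin.cons 0 (fun j : Fin N => ζ ^ (j : ℕ)) with hadef
  set w : Fin (N + 1) → F := Fin.cons v0 (fun _ : Fin N => (1 : F)) with hwdef
  have hainj : Function.Injective a := by
    rw [hadef, Fin.cons_injective_iff]
    constructor
    · rintro ⟨j, hj⟩
      exact pow_ne_zero _ hζne (by simpa using hj)
    · intro i j hij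
      have := pow_injOn_Iio_orderOf (x := ζ) (by rw [hζord]; exact i.isLt)
        (by rw [hζord]; exact j.isLt) hij
      exact Fin.ext this
  have hwne : ∀ i, w i ≠ 0 := by
    intro i
    refine Fin.cases ?_ ?_ i <;> simp only [hwdef, Fin.cons_zero, Fin.cons_succ]
    · intro h
      rw [h] at hv0
      rw [zero_pow (by omega)] at hv0
      exact hune hv0.symm
    · intro j
      exact one_ne_zero
  -- key character sum
  have hKey : ∀ s t : ℕ, s < k → t < k →
      ∑ i : Fin (N + 1), w i ^ (q + 1) * a i ^ (s + t * q) = 0 := by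
    intro s t hs ht
    have hkltq : k < q := by omega
    -- N does not divide s + t*q unless it is 0
    have hNdvd : 0 < s + t * q → ¬ N ∣ (s + t * q) := by
      intro hpos hdvd
      obtain ⟨c, hc⟩ := hdvd
      have hr3 : 3 * r = q + 1 := by omega
      have hsq : s < q := by omega
      have htq2 : t * q ≤ (q - 2) * q := Nat.mul_le_mul_right q (by omega)
      have hsub : (q - 2) * q = q * q - 2 * q := by
        zify [show 2 ≤ q by omega, hqq]; ring
      have hmlt : s + t * q < 3 * N := by omega
      have hc3 : c < 3 := by
        by_contra hcc
        push_neg at hcc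
        have : N * 3 ≤ N * c := Nat.mul_le_mul_left N hcc
        omega
      have hc0 : c ≠ 0 := by
        rintro rfl
        omega
      interval_cases c
      · omega
      · -- s + t*q = N
        have hid : N * 1 = (r - 1) * q + (q - r) := by
          rw [hNdef]
          zify [show 1 ≤ q by omega, show 1 ≤ r by omega, show r ≤ q by omega]
          ring
        rw [hid] at hc
        have h1 : s = (s + t * q) % q := by
          rw [Nat.add_mul_mod_self_right, Nat.mod_eq_of_lt hsq]
        have h2 : ((r - 1) * q + (q - r)) % q = q - r := by
          rw [Nat.add_comm, Nat.add_mul_mod_self_right, Nat.mod_eq_of_lt (by omega)]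
        rw [hc, h2] at h1
        omega
      · -- s + t*q = 2N
        have hid : N * 2 = (2 * r - 1) * q + (q - 2 * r) := by
          rw [hNdef]
          zify [show 1 ≤ q by omega, show 1 ≤ 2 * r by omega, show 2 * r ≤ q by omega,
            show 1 ≤ r by omega]
          ring
        rw [hid] at hc
        have h1 : s = (s + t * q) % q := by
          rw [Nat.add_mul_mod_self_right, Nat.mod_eq_of_lt hsq]
        have h2 : ((2 * r - 1) * q + (q - 2 * r)) % q = q - 2 * r := by
          rw [Nat.add_comm, Nat.add_mul_mod_self_right, Nat.mod_eq_of_lt (by omega)]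
        rw [hc, h2] at h1
        -- now s = q - 2r, deduce t * q = (2r - 1) * q
        have h3 : t * q = (2 * r - 1) * q := by omega
        have h4 : t = 2 * r - 1 := Nat.eq_of_mul_eq_mul_right (by omega) h3
        omega
    set m := s + t * q with hm
    -- expand the sum over the cons
    rw [Fin.sum_univ_succ]
    simp only [hadef, hwdef, Fin.cons_zero, Fin.cons_succ, one_pow, one_mul]
    rw [hv0]
    have hsum2 : ∑ i : Fin N, (ζ ^ (i : ℕ)) ^ m = ∑ i ∈ Finset.range N, (ζ ^ m) ^ i := by
      rw [← Fin.sum_univ_eq_sum_range (fun i => (ζ ^ m) ^ i) N]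
      exact Finset.sum_congr rfl fun i _ => by rw [← pow_mul, ← pow_mul, mul_comm]
    rcases Nat.eq_zero_or_pos m with hm0 | hmpos
    · rw [hm0]
      simp only [pow_zero, mul_one]
      rw [Finset.sum_const, Finset.card_univ, Fintype.card_fin]
      simp only [nsmul_eq_mul, hudef]
      ring
    · rw [zero_pow (by omega), mul_zero, zero_add, hsum2]
      have hζm : ζ ^ m ≠ 1 := by
        intro h
        exact hNdvd hmpos (hζord ▸ orderOf_dvd_of_pow_eq_one h)
      rw [geom_sum_eq hζm]
      rw [← pow_mul, mul_comm m N, pow_mul, hζN, one_pow, sub_self, zero_div]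
  -- the code
  set ℓ := grsMap F (N + 1) k w a with hldef
  have hlapp : ∀ d i, ℓ d i = w i * ∑ j : Fin k, d j * a i ^ (j : ℕ) := fun d i => rfl
  have hkN : k ≤ N + 1 := by omega
  -- injectivity
  have hinj : Function.Injective ℓ := by
    rw [← LinearMap.ker_eq_bot, LinearMap.ker_eq_bot']
    intro d hd
    rcases Nat.eq_zero_or_pos k with hk0 | hkpos
    · subst hk0; exact Subsingleton.elim d 0
    set P : Polynomial F := ∑ j : Fin k, Polynomial.C (d j) * Polynomial.X ^ (j : ℕ) with hP
    have hPeval : ∀ x : F, P.eval x = ∑ j : Fin k, d j * x ^ (j : ℕ) := by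
      intro x
      rw [hP, Polynomial.eval_finset_sum]
      simp
    have hPz : P = 0 := by
      apply Polynomial.eq_zero_of_natDegree_lt_card_of_eval_eq_zero P hainj
      · intro i
        have hdi : ℓ d i = 0 := by rw [hd]; rfl
        rw [hlapp] at hdi
        rcases mul_eq_zero.mp hdi with h | h
        · exact absurd h (hwne i)
        · rw [hPeval]; exact h
      · calc P.natDegree ≤ k - 1 := Polynomial.natDegree_sum_le_of_forall_le _ _ fun j _ =>
              (Polynomial.natDegree_C_mul_X_pow_le (d j) (j : ℕ)).trans (by omega)
          _ < Fintype.card (Fin (N + 1)) := by rw [Fintype.card_fin]; omega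
    funext j
    have : P.coeff (j : ℕ) = d j := by
      rw [hP, Polynomial.finset_sum_coeff]
      simp only [Polynomial.coeff_C_mul, Polynomial.coeff_X_pow]
      rw [Finset.sum_eq_single j]
      · simp
      · intro i _ hne
        simp [Fin.val_eq_val, hne, Ne.symm hne]
      · intro h
        exact absurd (Finset.mem_univ j) h
    rw [hPz] at this
    simpa using this.symm
  refine ⟨LinearMap.range ℓ, ?_, ?_, ?_⟩
  · rw [LinearMap.finrank_range_of_inj hinj]
    simp [Module.finrank_pi]
  · -- weight bound
    rintro c ⟨d, rfl⟩ hcne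
    have hkpos : 0 < k := by
      rcases Nat.eq_zero_or_pos k with hk0 | h
      · exfalso
        apply hcne
        subst hk0
        have : d = 0 := Subsingleton.elim d 0
        rw [this, map_zero]
      · exact h
    set P : Polynomial F := ∑ j : Fin k, Polynomial.C (d j) * Polynomial.X ^ (j : ℕ) with hP
    have hPeval : ∀ x : F, P.eval x = ∑ j : Fin k, d j * x ^ (j : ℕ) := by
      intro x
      rw [hP, Polynomial.eval_finset_sum]
      simp
    have hPne : P ≠ 0 := by
      intro h
      apply hcne
      have : ∀ i, ℓ d i = 0 := by
        intro i
        rw [hlapp, ← hPeval, h]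
        simp
      funext i
      exact this i
    have hdeg : P.natDegree ≤ k - 1 := Polynomial.natDegree_sum_le_of_forall_le _ _ fun j _ =>
      (Polynomial.natDegree_C_mul_X_pow_le (d j) (j : ℕ)).trans (by omega)
    set Z : Finset (Fin (N + 1)) := Finset.univ.filter (fun i => ℓ d i = 0) with hZ
    have hZcard : Z.card ≤ k - 1 := by
      have hsubset : ∀ i ∈ Z, a i ∈ P.roots.toFinset := by
        intro i hi
        rw [hZ, Finset.mem_filter] at hi
        rw [Multiset.mem_toFinset, Polynomial.mem_roots hPne]
        have := hi.2
        rw [hlapp] at this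
        rcases mul_eq_zero.mp this with h | h
        · exact absurd h (hwne i)
        · rw [Polynomial.IsRoot, hPeval]; exact h
      calc Z.card ≤ P.roots.toFinset.card :=
            Finset.card_le_card_of_injOn a hsubset (fun x _ y _ h => hainj h)
        _ ≤ Multiset.card P.roots := Multiset.toFinset_card_le _
        _ ≤ P.natDegree := Polynomial.card_roots' P
        _ ≤ k - 1 := hdeg
    have hncard : {i | ℓ d i ≠ 0}.ncard = (N + 1) - Z.card := by
      have h1 : {i | ℓ d i ≠ 0} = ↑(Finset.univ.filter (fun i => ¬ ℓ d i = 0)) := by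
        ext i; simp
      rw [h1, Set.ncard_coe_finset, hZ]
      have h2 := Finset.card_filter_add_card_filter_not
        (s := (Finset.univ : Finset (Fin (N + 1)))) (p := fun i => ℓ d i = 0)
      simp only [Finset.card_univ, Fintype.card_fin] at h2
      omega
    rw [hncard]
    omega
  · -- Hermitian self-orthogonality
    rintro b ⟨d, rfl⟩ c ⟨e, rfl⟩
    have hpt : ∀ i, ℓ d i * (ℓ e i) ^ q =
        ∑ s : Fin k, ∑ t : Fin k, (d s * e t ^ q) *
          (w i ^ (q + 1) * a i ^ ((s : ℕ) + (t : ℕ) * q)) := by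
      intro i
      rw [hlapp, hlapp, mul_pow, hsumpow (a i) k e (fun t => a i ^ (t : ℕ))]
      have hAB : ∀ A B : F, (w i * A) * (w i ^ q * B) = w i ^ (q + 1) * (A * B) := by
        intro A B; ring
      rw [hAB, Finset.sum_mul_sum, Finset.mul_sum]
      refine Finset.sum_congr rfl fun s _ => ?_
      rw [Finset.mul_sum]
      refine Finset.sum_congr rfl fun t _ => ?_
      rw [show (a i) ^ ((s : ℕ) + (t : ℕ) * q) = a i ^ (s : ℕ) * (a i ^ (t : ℕ)) ^ q by
        rw [pow_add, pow_mul]]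
      ring
    calc ∑ i, ℓ d i * (ℓ e i) ^ q
        = ∑ i : Fin (N+1), ∑ s : Fin k, ∑ t : Fin k, (d s * e t ^ q) *
          (w i ^ (q + 1) * a i ^ ((s : ℕ) + (t : ℕ) * q)) :=
          Finset.sum_congr rfl fun i _ => hpt i
      _ = ∑ s : Fin k, ∑ t : Fin k, (d s * e t ^ q) *
          ∑ i : Fin (N+1), (w i ^ (q + 1) * a i ^ ((s : ℕ) + (t : ℕ) * q)) := by
          rw [Finset.sum_comm]
          refine Finset.sum_congr rfl fun s _ => ?_
          rw [Finset.sum_comm]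
          refine Finset.sum_congr rfl fun t _ => ?_
          rw [Finset.mul_sum]
      _ = 0 := by
          refine Finset.sum_eq_zero fun s _ => Finset.sum_eq_zero fun t _ => ?_
          rw [hKey s t s.isLt t.isLt, mul_zero]
end
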